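/- For a critical binary Galton–Watson branching process {U_n} starting from one individual (offspring distribution p₀ = p₂ = 1/2), the survival probability satisfies P(U_n > 0) ~ 2/n as n → ∞, i.e., lim_{n→∞} n·P(U_n > 0) = 2. -/

import Mathlib

/-!
The survival probability `s n = 1 - q n` obeys `s (n + 1) = s n * (1 - s n / 2)`, so it decreases
to `0` and `1 / s (n + 1) - 1 / s n = (1 / 2) / (1 - s n / 2) → 1 / 2`. By Cesàro, `1 / s n` grows
like `n / 2`, i.e. `n * s n → 2`. The same argument works for `s (n + 1) = s n * (1 - c * s n)`
with any `c > 0`, giving `n * s n → 1 / c`.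
-/

open Filter Finset Topology

theorem Filter.Tendsto.inv_smul_of_tendsto_sub {E : Type*} [NormedAddCommGroup E]
    [NormedSpace ℝ E] {u : ℕ → E} {a : E} (h : Tendsto (fun n => u (n + 1) - u n) atTop (𝓝 a)) :
    Tendsto (fun n : ℕ => (n⁻¹ : ℝ) • u n) atTop (𝓝 a) := by
  have hu : ∀ n : ℕ, (n⁻¹ : ℝ) • u n
      = (n⁻¹ : ℝ) • u 0 + (n⁻¹ : ℝ) • ∑ i ∈ range n, (u (i + 1) - u i) := fun n => by
    rw [sum_range_sub, ← smul_add, add_sub_cancel]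
  have h0 : Tendsto (fun n : ℕ => (n⁻¹ : ℝ) • u 0) atTop (𝓝 0) := by
    simpa using (tendsto_inv_atTop_nhds_zero_nat (𝕜 := ℝ)).smul_const (u 0)
  simpa only [hu, zero_add] using h0.add h.cesaro_smul

namespace LogisticDecay

variable {c : ℝ} {s : ℕ → ℝ}

theorem pos_and_mul_lt_one (hrec : ∀ n, s (n + 1) = s n * (1 - c * s n))
    (hpos : 0 < s 0) (hlt : c * s 0 < 1) (n : ℕ) : 0 < s n ∧ c * s n < 1 := by
  induction n with
  | zero => exact ⟨hpos, hlt⟩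
  | succ n ih =>
    obtain ⟨hn, hn'⟩ := ih
    rw [hrec]
    -- `x * (1 - x) ≤ 1 / 4` for `x = c * s n`
    exact ⟨mul_pos hn (by linarith), by nlinarith [sq_nonneg (c * s n - 1 / 2)]⟩

theorem inv_succ_sub_inv (hrec : ∀ n, s (n + 1) = s n * (1 - c * s n))
    (hpos : 0 < s 0) (hlt : c * s 0 < 1) (n : ℕ) :
    (s (n + 1))⁻¹ - (s n)⁻¹ = c / (1 - c * s n) := by
  obtain ⟨hn, hn'⟩ := pos_and_mul_lt_one hrec hpos hlt n
  have : 1 - c * s n ≠ 0 := by linarith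
  rw [hrec, mul_inv, ← mul_sub_one, eq_div_iff this, mul_assoc, sub_mul,
    inv_mul_cancel₀ this, inv_mul_eq_iff_eq_mul₀ hn.ne']
  ring

theorem tendsto_zero (hc : 0 < c) (hrec : ∀ n, s (n + 1) = s n * (1 - c * s n))
    (hpos : 0 < s 0) (hlt : c * s 0 < 1) : Tendsto s atTop (𝓝 0) := by
  have hbounds := pos_and_mul_lt_one hrec hpos hlt
  have hanti : Antitone s := antitone_nat_of_succ_le fun n => by
    rw [hrec]
    nlinarith [hbounds n, mul_pos hc (hbounds n).1]
  have hL := tendsto_atTop_ciInf hanti ⟨0, by rintro _ ⟨n, rfl⟩; exact (hbounds n).1.le⟩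
  set L := ⨅ n, s n
  have hfix : L = L * (1 - c * L) := by
    refine tendsto_nhds_unique ((tendsto_add_atTop_iff_nat 1).mpr hL) ?_
    simp_rw [hrec]
    exact hL.mul (tendsto_const_nhds.sub (tendsto_const_nhds.mul hL))
  have hcL : c * L ^ 2 = 0 := by linear_combination hfix
  rwa [(pow_eq_zero_iff two_ne_zero).mp ((mul_eq_zero.mp hcL).resolve_left hc.ne')] at hL

theorem tendsto_natCast_mul (hc : 0 < c) (hrec : ∀ n, s (n + 1) = s n * (1 - c * s n))
    (hpos : 0 < s 0) (hlt : c * s 0 < 1) :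
    Tendsto (fun n : ℕ => (n : ℝ) * s n) atTop (𝓝 c⁻¹) := by
  have hdiff : Tendsto (fun n => (s (n + 1))⁻¹ - (s n)⁻¹) atTop (𝓝 c) := by
    simp_rw [inv_succ_sub_inv hrec hpos hlt]
    have hden : Tendsto (fun n => 1 - c * s n) atTop (𝓝 1) := by
      simpa using tendsto_const_nhds.sub ((tendsto_zero hc hrec hpos hlt).const_mul c)
    simpa only [div_eq_mul_inv, inv_one, mul_one] using (hden.inv₀ one_ne_zero).const_mul c
  have hmean := (hdiff.inv_smul_of_tendsto_sub (u := fun n => (s n)⁻¹)).inv₀ hc.ne'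
  simpa only [smul_eq_mul, mul_inv, inv_inv] using hmean

end LogisticDecay

/-- For a critical binary Galton–Watson branching process (offspring distribution
`p₀ = p₂ = 1/2`), the extinction probabilities `q_n = P(U_n = 0)` satisfy `q₀ = 0`,
`q_{n+1} = (1 + q_n²)/2`, and the survival probability `1 - q_n = P(U_n > 0)` satisfies
`n · P(U_n > 0) → 2` as `n → ∞`. -/
theorem stmt_4 (q : ℕ → ℝ) (hq0 : q 0 = 0)
    (hqrec : ∀ n : ℕ, q (n + 1) = (1 + (q n) ^ 2) / 2) :
    Filter.Tendsto (fun n : ℕ => (n : ℝ) * (1 - q n)) Filter.atTop (nhds 2) := by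
  have hrec : ∀ n, 1 - q (n + 1) = (1 - q n) * (1 - 2⁻¹ * (1 - q n)) := fun n => by
    rw [hqrec]; ring
  simpa using LogisticDecay.tendsto_natCast_mul (c := 2⁻¹) (by norm_num) hrec
    (by simp [hq0]) (by norm_num [hq0])
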